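/- For all 0 < ε < 1/2, μ ≥ 1, m, n ≥ 3, k ≥ 1, there exists a finite set S(μ,ε) ⊆ ℝ^{m×n} of cardinality at most (mnk/ε)^{3(m+n)k} such that for every μ-incoherent matrix X ∈ ℝ^{m×n} of rank at most k with spectral norm ‖X‖₂ = 1, there exists Y ∈ S(μ,ε) with ‖Y - X‖_F < ε and Y is 4μ√k-regular. -/

import Mathlib

open scoped BigOperators

/-- Squared Frobenius norm. -/
noncomputable def froSq {m n : ℕ} (X : Matrix (Fin m) (Fin n) ℝ) : ℝ :=
  ∑ i, ∑ j, (X i j) ^ 2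

/-- Frobenius norm. -/
noncomputable def fro {m n : ℕ} (X : Matrix (Fin m) (Fin n) ℝ) : ℝ :=
  Real.sqrt (froSq X)

/-- Spectral (operator) norm of a matrix, viewed as a map between Euclidean spaces. -/
noncomputable def specNorm {m n : ℕ} (X : Matrix (Fin m) (Fin n) ℝ) : ℝ :=
  ‖LinearMap.toContinuousLinearMap (Matrix.toEuclideanLin X)‖

/-- `X` is `α`-regular: every entry is at most `(α/√(mn))‖X‖_F` in absolute value. -/
def Regular {m n : ℕ} (α : ℝ) (X : Matrix (Fin m) (Fin n) ℝ) : Prop :=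
  ∀ i j, |X i j| ≤ (α / Real.sqrt (m * n)) * fro X

/-- `X` is `μc`-incoherent with rank at most `k`. -/
def Incoherent {m n : ℕ} (μc : ℝ) (k : ℕ) (X : Matrix (Fin m) (Fin n) ℝ) : Prop :=
  ∃ (U : Matrix (Fin m) (Fin k) ℝ) (S : Matrix (Fin k) (Fin k) ℝ)
    (V : Matrix (Fin n) (Fin k) ℝ),
    X = U * S * V.transpose ∧ U.transpose * U = 1 ∧ V.transpose * V = 1 ∧
    (∀ l l' : Fin k, l ≠ l' → S l l' = 0) ∧ (∀ l : Fin k, 0 ≤ S l l) ∧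
    (∀ (i : Fin m) (l : Fin k), |U i l| ≤ Real.sqrt (μc / m)) ∧
    (∀ (j : Fin n) (l : Fin k), |V j l| ≤ Real.sqrt (μc / n))

/-! Write `X = U diag(σ) Vᵀ` with orthonormal columns. Every entry of `U` and `V` is at most `1`
in absolute value, and so is every `σ l`, being at most `‖X‖₂ = 1`. Rounding all `(m + n + 1) k`
factor entries down to the grid `ρℤ ∩ [-1, 1]` therefore moves each entry of `X` by at most
`7kρ`, and the rounded products form a set of at most `(2/ρ + 3)^((m+n+1)k)` matrices. Rounding
loosens the incoherence bounds `√(μ/m)`, `√(μ/n)` by only `ρ`, so the rounded matrix `Y` has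
entries of size about `(μ/√(mn)) ∑ σ ≤ (μ/√(mn)) √k ‖X‖_F`; since `‖X‖_F ≥ ‖X‖₂ = 1` is much larger
than `‖Y - X‖_F`, this is at most `(4μ√k/√(mn)) ‖Y‖_F`. -/

open Matrix Finset WithLp

section Norms

variable {m n : ℕ}

lemma froSq_nonneg (X : Matrix (Fin m) (Fin n) ℝ) : 0 ≤ froSq X := by
  unfold froSq; positivity

lemma fro_nonneg (X : Matrix (Fin m) (Fin n) ℝ) : 0 ≤ fro X :=
  Real.sqrt_nonneg _

attribute [local instance] Matrix.frobeniusNormedAddCommGroup in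
lemma fro_eq_frobenius_norm (X : Matrix (Fin m) (Fin n) ℝ) : fro X = ‖X‖ := by
  simp [frobenius_norm_def, fro, froSq, Real.sqrt_eq_rpow]

attribute [local instance] Matrix.frobeniusNormedAddCommGroup in
lemma fro_le_fro_add_fro_sub (X Y : Matrix (Fin m) (Fin n) ℝ) :
    fro X ≤ fro Y + fro (Y - X) := by
  simpa only [fro_eq_frobenius_norm, norm_sub_rev Y X] using norm_le_insert' X Y

lemma fro_le_of_abs_apply_le {X : Matrix (Fin m) (Fin n) ℝ} {c : ℝ} (hc : 0 ≤ c)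
    (hX : ∀ i j, |X i j| ≤ c) : fro X ≤ √(m * n) * c := by
  have hsq : froSq X ≤ m * n * c ^ 2 := calc
    froSq X ≤ ∑ _i : Fin m, ∑ _j : Fin n, c ^ 2 :=
      sum_le_sum fun i _ => sum_le_sum fun j _ =>
        sq_le_sq' (abs_le.1 (hX i j)).1 (abs_le.1 (hX i j)).2
    _ = m * n * c ^ 2 := by simp [mul_assoc]
  calc fro X ≤ √(m * n * c ^ 2) := Real.sqrt_le_sqrt hsq
    _ = √(m * n) * c := by rw [Real.sqrt_mul (by positivity), Real.sqrt_sq hc]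

lemma norm_mulVec_le_specNorm (X : Matrix (Fin m) (Fin n) ℝ) (v : Fin n → ℝ) :
    ‖toLp 2 (X *ᵥ v)‖ ≤ specNorm X * ‖toLp 2 v‖ :=
  (LinearMap.toContinuousLinearMap (toEuclideanLin X)).le_opNorm (toLp 2 v)

lemma specNorm_le_fro (X : Matrix (Fin m) (Fin n) ℝ) : specNorm X ≤ fro X := by
  refine ContinuousLinearMap.opNorm_le_bound _ (fro_nonneg X) fun v => ?_
  rw [LinearMap.coe_toContinuousLinearMap', EuclideanSpace.norm_eq, EuclideanSpace.norm_eq, fro,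
    ← Real.sqrt_mul (froSq_nonneg X), froSq, sum_mul]
  refine Real.sqrt_le_sqrt (sum_le_sum fun i _ => ?_)
  simpa [toLpLin_apply, mulVec, dotProduct] using sum_mul_sq_le_sq_mul_sq univ (X i) v

end Norms

section Factorization

variable {m n k : ℕ} {U : Matrix (Fin m) (Fin k) ℝ} {V : Matrix (Fin n) (Fin k) ℝ}

lemma sum_sq_apply_eq_one_of_transpose_mul_self_eq_one (hU : Uᵀ * U = 1) (l : Fin k) :
    ∑ i, U i l ^ 2 = 1 := by
  simpa [mul_apply, sq] using congrFun (congrFun hU l) l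

lemma abs_apply_le_one_of_transpose_mul_self_eq_one (hU : Uᵀ * U = 1) (i : Fin m) (l : Fin k) :
    |U i l| ≤ 1 := by
  rw [← sq_le_one_iff_abs_le_one, ← sum_sq_apply_eq_one_of_transpose_mul_self_eq_one hU l]
  exact single_le_sum (f := fun i => U i l ^ 2) (fun _ _ => sq_nonneg _) (mem_univ i)

lemma norm_col_eq_one_of_transpose_mul_self_eq_one (hU : Uᵀ * U = 1) (l : Fin k) :
    ‖toLp 2 fun i => U i l‖ = 1 := by
  simp [EuclideanSpace.norm_eq, sum_sq_apply_eq_one_of_transpose_mul_self_eq_one hU l]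

lemma mul_diagonal_mul_transpose_apply (U : Matrix (Fin m) (Fin k) ℝ) (σ : Fin k → ℝ)
    (V : Matrix (Fin n) (Fin k) ℝ) (i : Fin m) (j : Fin n) :
    (U * diagonal σ * Vᵀ) i j = ∑ l, U i l * σ l * V j l := by
  rw [mul_apply]; simp [mul_diagonal]

lemma froSq_eq_trace (X : Matrix (Fin m) (Fin n) ℝ) : froSq X = (Xᵀ * X).trace := by
  simp only [froSq, trace, Matrix.diag, mul_apply, transpose_apply, sq]
  exact sum_comm

lemma froSq_mul_diagonal_mul_transpose (hU : Uᵀ * U = 1) (hV : Vᵀ * V = 1) (σ : Fin k → ℝ) :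
    froSq (U * diagonal σ * Vᵀ) = ∑ l, σ l ^ 2 := by
  rw [froSq_eq_trace, transpose_mul, transpose_mul, transpose_transpose, diagonal_transpose]
  calc (V * (diagonal σ * Uᵀ) * (U * diagonal σ * Vᵀ)).trace
      = (V * (diagonal σ * (Uᵀ * U) * diagonal σ) * Vᵀ).trace := by simp only [Matrix.mul_assoc]
    _ = (diagonal σ * diagonal σ * (Vᵀ * V)).trace := by
      rw [hU, Matrix.mul_one, trace_mul_comm, ← Matrix.mul_assoc, trace_mul_comm]
    _ = ∑ l, σ l ^ 2 := by simp [hV, trace_diagonal, sq]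

lemma le_specNorm_mul_diagonal_mul_transpose (hU : Uᵀ * U = 1) (hV : Vᵀ * V = 1)
    {σ : Fin k → ℝ} {l : Fin k} (hσ : 0 ≤ σ l) : σ l ≤ specNorm (U * diagonal σ * Vᵀ) := by
  have hcol : (U * diagonal σ * Vᵀ) *ᵥ (fun j => V j l) = σ l • fun i => U i l := by
    have h : U * diagonal σ * Vᵀ * V = U * diagonal σ := by
      rw [Matrix.mul_assoc, hV, Matrix.mul_one]
    ext i
    have := congrFun (congrFun h i) l
    rw [mul_apply, mul_diagonal] at this
    simpa [mulVec, dotProduct, mul_comm] using this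
  simpa [hcol, norm_smul, abs_of_nonneg hσ, norm_col_eq_one_of_transpose_mul_self_eq_one hU,
    norm_col_eq_one_of_transpose_mul_self_eq_one hV] using
    norm_mulVec_le_specNorm (U * diagonal σ * Vᵀ) fun j => V j l

lemma sum_le_sqrt_mul_fro_mul_diagonal_mul_transpose (hU : Uᵀ * U = 1) (hV : Vᵀ * V = 1)
    (σ : Fin k → ℝ) :
    ∑ l, σ l ≤ √k * fro (U * diagonal σ * Vᵀ) := by
  rw [fro, froSq_mul_diagonal_mul_transpose hU hV, ← Real.sqrt_mul (Nat.cast_nonneg k)]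
  simpa using Real.le_sqrt_of_sq_le (sq_sum_le_card_mul_sum_sq (s := univ) (f := σ))

end Factorization

section Rounding

variable {ρ x : ℝ}

noncomputable def roundDown (ρ x : ℝ) : ℝ := ρ * ⌊x / ρ⌋

lemma roundDown_le (hρ : 0 < ρ) : roundDown ρ x ≤ x := by
  have := Int.floor_le (x / ρ)
  unfold roundDown
  calc ρ * ⌊x / ρ⌋ ≤ ρ * (x / ρ) := by gcongr
    _ = x := by field_simp

lemma sub_lt_roundDown (hρ : 0 < ρ) : x - ρ < roundDown ρ x := by
  have := Int.lt_floor_add_one (x / ρ)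
  unfold roundDown
  calc x - ρ = ρ * (x / ρ + 1) - ρ - ρ := by field_simp; ring
    _ < ρ * (⌊x / ρ⌋ + 1 + 1) - ρ - ρ := by gcongr
    _ = ρ * ⌊x / ρ⌋ := by ring

lemma abs_roundDown_sub_le (hρ : 0 < ρ) : |roundDown ρ x - x| ≤ ρ :=
  abs_le.2 ⟨by linarith [sub_lt_roundDown (x := x) hρ], by linarith [roundDown_le (x := x) hρ]⟩

lemma abs_roundDown_le (hρ : 0 < ρ) : |roundDown ρ x| ≤ |x| + ρ := by
  have := abs_roundDown_sub_le (x := x) hρ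
  calc |roundDown ρ x| = |x + (roundDown ρ x - x)| := by ring_nf
    _ ≤ |x| + ρ := (abs_add_le _ _).trans (by gcongr)

lemma roundDown_nonneg (hρ : 0 < ρ) (hx : 0 ≤ x) : 0 ≤ roundDown ρ x :=
  mul_nonneg hρ.le (by exact_mod_cast Int.floor_nonneg.2 (div_nonneg hx hρ.le))

noncomputable def roundingGrid (ρ : ℝ) : Finset ℝ :=
  (Icc (-⌈ρ⁻¹⌉₊ : ℤ) ⌈ρ⁻¹⌉₊).image fun j : ℤ => ρ * j

lemma card_roundingGrid_le (hρ : 0 < ρ) : ((roundingGrid ρ).card : ℝ) ≤ 2 / ρ + 3 := by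
  have hcard : (roundingGrid ρ).card ≤ 2 * ⌈ρ⁻¹⌉₊ + 1 :=
    card_image_le.trans (by rw [Int.card_Icc]; omega)
  have hceil := Nat.ceil_lt_add_one (inv_nonneg.2 hρ.le)
  calc ((roundingGrid ρ).card : ℝ) ≤ 2 * ⌈ρ⁻¹⌉₊ + 1 := by exact_mod_cast hcard
    _ ≤ 2 / ρ + 3 := by rw [div_eq_mul_inv]; linarith

lemma roundDown_mem_roundingGrid (hρ : 0 < ρ) (hx : |x| ≤ 1) : roundDown ρ x ∈ roundingGrid ρ := by
  have hceil : ρ⁻¹ ≤ ⌈ρ⁻¹⌉₊ := Nat.le_ceil _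
  have hxρ : |x / ρ| ≤ ρ⁻¹ := by
    rw [abs_div, abs_of_pos hρ, div_le_iff₀ hρ, inv_mul_cancel₀ hρ.ne']; exact hx
  refine mem_image.2 ⟨⌊x / ρ⌋, mem_Icc.2 ⟨?_, ?_⟩, rfl⟩
  · rw [Int.le_floor]; push_cast; linarith [neg_abs_le (x / ρ)]
  · have := Int.floor_le (x / ρ)
    have : (⌊x / ρ⌋ : ℝ) ≤ ⌈ρ⁻¹⌉₊ := by linarith [le_abs_self (x / ρ)]
    exact_mod_cast this

end Rounding

section Net

variable {m n k : ℕ} {ρ : ℝ}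

def matricesWithEntriesIn (a b : ℕ) (G : Finset ℝ) : Finset (Matrix (Fin a) (Fin b) ℝ) :=
  Fintype.piFinset fun _ => Fintype.piFinset fun _ => G

lemma mem_matricesWithEntriesIn {a b : ℕ} {G : Finset ℝ} {A : Matrix (Fin a) (Fin b) ℝ} :
    A ∈ matricesWithEntriesIn a b G ↔ ∀ i j, A i j ∈ G := by
  exact Fintype.mem_piFinset.trans (forall_congr' fun _ => Fintype.mem_piFinset)

lemma card_matricesWithEntriesIn (a b : ℕ) (G : Finset ℝ) :
    (matricesWithEntriesIn a b G).card = G.card ^ (a * b) := by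
  refine (Fintype.card_piFinset_const (Fintype.piFinset fun _ : Fin b => G) a).trans ?_
  rw [Fintype.card_piFinset_const, ← pow_mul, mul_comm]

noncomputable def factorNet (m n k : ℕ) (ρ : ℝ) : Finset (Matrix (Fin m) (Fin n) ℝ) :=
  (matricesWithEntriesIn m k (roundingGrid ρ) ×ˢ (Fintype.piFinset fun _ => roundingGrid ρ) ×ˢ
      matricesWithEntriesIn n k (roundingGrid ρ)).image
    fun t : Matrix (Fin m) (Fin k) ℝ × (Fin k → ℝ) × Matrix (Fin n) (Fin k) ℝ =>
      t.1 * diagonal t.2.1 * t.2.2ᵀ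

lemma card_factorNet_le (hρ : 0 < ρ) :
    ((factorNet m n k ρ).card : ℝ) ≤ (2 / ρ + 3) ^ ((m + n + 1) * k) := by
  have hcard : (factorNet m n k ρ).card ≤ (roundingGrid ρ).card ^ ((m + n + 1) * k) := by
    refine card_image_le.trans (le_of_eq ?_)
    rw [card_product, card_product, card_matricesWithEntriesIn, card_matricesWithEntriesIn,
      Fintype.card_piFinset_const, ← pow_add, ← pow_add]
    congr 1; ring
  calc ((factorNet m n k ρ).card : ℝ) ≤ ((roundingGrid ρ).card : ℝ) ^ ((m + n + 1) * k) := by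
        exact_mod_cast hcard
    _ ≤ (2 / ρ + 3) ^ ((m + n + 1) * k) := by gcongr; exact card_roundingGrid_le hρ

noncomputable def roundedFactorization (ρ : ℝ) (U : Matrix (Fin m) (Fin k) ℝ) (σ : Fin k → ℝ)
    (V : Matrix (Fin n) (Fin k) ℝ) : Matrix (Fin m) (Fin n) ℝ :=
  U.map (roundDown ρ) * diagonal (fun l => roundDown ρ (σ l)) * (V.map (roundDown ρ))ᵀ

variable {U : Matrix (Fin m) (Fin k) ℝ} {σ : Fin k → ℝ} {V : Matrix (Fin n) (Fin k) ℝ}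

lemma roundedFactorization_mem_factorNet (hρ : 0 < ρ) (hU : ∀ i l, |U i l| ≤ 1)
    (hσ : ∀ l, |σ l| ≤ 1) (hV : ∀ j l, |V j l| ≤ 1) :
    roundedFactorization ρ U σ V ∈ factorNet m n k ρ := by
  refine mem_image.2 ⟨(U.map (roundDown ρ), fun l => roundDown ρ (σ l), V.map (roundDown ρ)),
    mem_product.2 ⟨mem_matricesWithEntriesIn.2 fun i l => ?_, mem_product.2
      ⟨Fintype.mem_piFinset.2 fun l => ?_, mem_matricesWithEntriesIn.2 fun j l => ?_⟩⟩, rfl⟩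
  exacts [roundDown_mem_roundingGrid hρ (hU i l), roundDown_mem_roundingGrid hρ (hσ l),
    roundDown_mem_roundingGrid hρ (hV j l)]

lemma abs_mul_mul_sub_mul_mul_le {ρ a b c a' b' c' : ℝ} (hρ : ρ ≤ 1)
    (ha : |a| ≤ 1) (hb : |b| ≤ 1) (hc : |c| ≤ 1)
    (ha' : |a' - a| ≤ ρ) (hb' : |b' - b| ≤ ρ) (hc' : |c' - c| ≤ ρ) :
    |a' * b' * c' - a * b * c| ≤ 7 * ρ := by
  have hρ0 : 0 ≤ ρ := (abs_nonneg _).trans ha'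
  have hb'2 : |b'| ≤ 2 := by
    calc |b'| = |b + (b' - b)| := by ring_nf
      _ ≤ 2 := (abs_add_le _ _).trans (by linarith)
  have hc'2 : |c'| ≤ 2 := by
    calc |c'| = |c + (c' - c)| := by ring_nf
      _ ≤ 2 := (abs_add_le _ _).trans (by linarith)
  calc |a' * b' * c' - a * b * c|
      = |(a' - a) * b' * c' + a * (b' - b) * c' + a * b * (c' - c)| := by ring_nf
    _ ≤ |a' - a| * |b'| * |c'| + |a| * |b' - b| * |c'| + |a| * |b| * |c' - c| := by
      simp only [← abs_mul]; exact abs_add_three _ _ _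
    _ ≤ ρ * 2 * 2 + 1 * ρ * 2 + 1 * 1 * ρ := by gcongr
    _ = 7 * ρ := by ring

lemma abs_roundedFactorization_sub_apply_le (hρ : 0 < ρ) (hρ1 : ρ ≤ 1) (hU : ∀ i l, |U i l| ≤ 1)
    (hσ : ∀ l, |σ l| ≤ 1) (hV : ∀ j l, |V j l| ≤ 1) (i : Fin m) (j : Fin n) :
    |(roundedFactorization ρ U σ V - U * diagonal σ * Vᵀ) i j| ≤ 7 * k * ρ := by
  rw [Matrix.sub_apply, roundedFactorization, mul_diagonal_mul_transpose_apply,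
    mul_diagonal_mul_transpose_apply, ← sum_sub_distrib]
  calc _ ≤ ∑ _l : Fin k, 7 * ρ := (abs_sum_le_sum_abs _ _).trans <| sum_le_sum fun l _ =>
        abs_mul_mul_sub_mul_mul_le hρ1 (hU i l) (hσ l) (hV j l) (abs_roundDown_sub_le hρ)
          (abs_roundDown_sub_le hρ) (abs_roundDown_sub_le hρ)
    _ = 7 * k * ρ := by simp [mul_comm, mul_left_comm]

lemma abs_roundedFactorization_apply_le (hρ : 0 < ρ) (hσ : ∀ l, 0 ≤ σ l) {a b : ℝ}
    (hU : ∀ i l, |U i l| ≤ a) (hV : ∀ j l, |V j l| ≤ b) (i : Fin m) (j : Fin n) :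
    |roundedFactorization ρ U σ V i j| ≤ (a + ρ) * (b + ρ) * ∑ l, σ l := by
  rw [roundedFactorization, mul_diagonal_mul_transpose_apply, mul_sum]
  refine (abs_sum_le_sum_abs _ _).trans (sum_le_sum fun l _ => ?_)
  have hσ' := roundDown_nonneg hρ (hσ l)
  rw [abs_mul, abs_mul, abs_of_nonneg hσ']
  have hUl : |roundDown ρ (U i l)| ≤ a + ρ := (abs_roundDown_le hρ).trans (by linarith [hU i l])
  have hVl : |roundDown ρ (V j l)| ≤ b + ρ := (abs_roundDown_le hρ).trans (by linarith [hV j l])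
  calc |roundDown ρ (U i l)| * roundDown ρ (σ l) * |roundDown ρ (V j l)|
      ≤ (a + ρ) * σ l * (b + ρ) :=
        mul_le_mul (mul_le_mul hUl (roundDown_le hρ) hσ' ((abs_nonneg _).trans hUl)) hVl
          (abs_nonneg _) (mul_nonneg ((abs_nonneg _).trans hUl) (hσ l))
    _ = (a + ρ) * (b + ρ) * σ l := by ring

end Net

lemma Incoherent.exists_diagonal_factorization {m n k : ℕ} {μc : ℝ}
    {X : Matrix (Fin m) (Fin n) ℝ} (h : Incoherent μc k X) :
    ∃ (U : Matrix (Fin m) (Fin k) ℝ) (σ : Fin k → ℝ) (V : Matrix (Fin n) (Fin k) ℝ),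
      X = U * diagonal σ * Vᵀ ∧ Uᵀ * U = 1 ∧ Vᵀ * V = 1 ∧ (∀ l, 0 ≤ σ l) ∧
      (∀ i l, |U i l| ≤ √(μc / m)) ∧ (∀ j l, |V j l| ≤ √(μc / n)) := by
  obtain ⟨U, S, V, rfl, hU, hV, hSdiag, hS, hUμ, hVμ⟩ := h
  exact ⟨U, S.diag, V, by rw [IsDiag.diagonal_diag hSdiag], hU, hV, hS, hUμ, hVμ⟩

lemma regular_of_abs_apply_le_mul_fro {m n : ℕ} {X Y : Matrix (Fin m) (Fin n) ℝ} {α c : ℝ}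
    (hc : 0 ≤ c) (hX : 1 ≤ fro X) (hYX : fro (Y - X) ≤ 1 / 2)
    (hY : ∀ i j, |Y i j| ≤ c * fro X) (hcα : 2 * c ≤ α / √(m * n)) : Regular α Y := by
  have hXY : fro X ≤ 2 * fro Y := by linarith [fro_le_fro_add_fro_sub X Y]
  intro i j
  calc |Y i j| ≤ c * fro X := hY i j
    _ ≤ c * (2 * fro Y) := by gcongr
    _ = 2 * c * fro Y := by ring
    _ ≤ α / √(m * n) * fro Y := by gcongr; exact fro_nonneg Y

lemma sqrt_div_add_mul_sqrt_div_add_le {μ ρ m n : ℝ} (hμ : 1 ≤ μ) (hm : 1 ≤ m) (hn : 1 ≤ n)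
    (hρ0 : 0 ≤ ρ) (hρ : 4 * ρ * √(m * n) ≤ 1) :
    (√(μ / m) + ρ) * (√(μ / n) + ρ) ≤ 2 * (μ / √(m * n)) := by
  have hmn : 0 < √(m * n) := Real.sqrt_pos.2 (by positivity)
  have hρ' : 4 * ρ ≤ 1 / √(m * n) := by rw [le_div_iff₀ hmn]; linarith
  have hinv : ∀ {a b : ℝ}, 1 ≤ a → 1 ≤ b → 1 / √(a * b) ≤ √(μ / a) := fun {a b} ha hb => by
    rw [one_div, ← Real.sqrt_inv]
    refine Real.sqrt_le_sqrt ?_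
    calc (a * b)⁻¹ ≤ a⁻¹ := inv_anti₀ (by positivity) (le_mul_of_one_le_right (by linarith) hb)
      _ ≤ μ / a := by rw [div_eq_mul_inv]; exact le_mul_of_one_le_left (by positivity) hμ
  have ha := hinv hm hn
  have hb := hinv hn hm
  rw [mul_comm n] at hb
  have hab : √(μ / m) * √(μ / n) = μ / √(m * n) := by
    rw [← Real.sqrt_mul (by positivity), div_mul_div_comm, Real.sqrt_div' _ (by positivity),
      Real.sqrt_mul_self (by positivity)]
  calc (√(μ / m) + ρ) * (√(μ / n) + ρ) ≤ (5 / 4 * √(μ / m)) * (5 / 4 * √(μ / n)) := by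
        gcongr <;> linarith
    _ ≤ 2 * (μ / √(m * n)) := by
        rw [← hab]; nlinarith [mul_nonneg (Real.sqrt_nonneg (μ / m)) (Real.sqrt_nonneg (μ / n))]

lemma pow_le_pow_of_le_fourteen_mul_add_three {x t : ℝ} {m n k : ℕ} (hx0 : 0 ≤ x)
    (hx : x ≤ 14 * t + 3) (ht : 15 ≤ t) (hmn : 2 ≤ m + n) :
    x ^ ((m + n + 1) * k) ≤ t ^ (3 * (m + n) * k) :=
  calc x ^ ((m + n + 1) * k) ≤ (t ^ 2) ^ ((m + n + 1) * k) := by gcongr; nlinarith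
    _ = t ^ (2 * ((m + n + 1) * k)) := by rw [← pow_mul]
    _ ≤ t ^ (3 * (m + n) * k) := pow_le_pow_right₀ (by linarith) (by nlinarith)

lemma card_factorNet_le_pow {m n k : ℕ} {ε : ℝ} (hε0 : 0 < ε) (hε1 : ε < 1 / 2) (hm : 3 ≤ m)
    (hn : 3 ≤ n) (hk : 1 ≤ k) :
    ((factorNet m n k (ε / (21 * k * √(m * n)))).card : ℝ) ≤
      ((m : ℝ) * n * k / ε) ^ (3 * (m + n) * k) := by
  have hm' : (3 : ℝ) ≤ m := by exact_mod_cast hm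
  have hn' : (3 : ℝ) ≤ n := by exact_mod_cast hn
  have hk' : (1 : ℝ) ≤ k := by exact_mod_cast hk
  set s := √(m * n)
  have hs2 : s ^ 2 = m * n := Real.sq_sqrt (by positivity)
  have hs3 : 3 ≤ s := Real.le_sqrt_of_sq_le (by nlinarith)
  refine (card_factorNet_le (by positivity)).trans
    (pow_le_pow_of_le_fourteen_mul_add_three (by positivity) ?_
      (by rw [le_div_iff₀ hε0]; nlinarith) (by omega))
  have h2ρ : 2 / (ε / (21 * k * s)) = 42 * k * s / ε := by field_simp; ring
  rw [h2ρ, ← hs2, mul_div_assoc', add_le_add_iff_right]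
  have : 0 ≤ k * s * (s - 3) := mul_nonneg (by positivity) (by linarith)
  exact div_le_div_of_nonneg_right (by nlinarith) hε0.le

lemma regular_roundedFactorization {m n k : ℕ} {μ ρ : ℝ} {U : Matrix (Fin m) (Fin k) ℝ}
    {σ : Fin k → ℝ} {V : Matrix (Fin n) (Fin k) ℝ} (hμ : 1 ≤ μ) (hm : 1 ≤ m) (hn : 1 ≤ n)
    (hρ0 : 0 < ρ) (hρ : 4 * ρ * √(m * n) ≤ 1) (hU : Uᵀ * U = 1) (hV : Vᵀ * V = 1)
    (hσ : ∀ l, 0 ≤ σ l) (hUμ : ∀ i l, |U i l| ≤ √(μ / m)) (hVμ : ∀ j l, |V j l| ≤ √(μ / n))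
    (hX : 1 ≤ fro (U * diagonal σ * Vᵀ))
    (herr : fro (roundedFactorization ρ U σ V - U * diagonal σ * Vᵀ) ≤ 1 / 2) :
    Regular (4 * μ * √k) (roundedFactorization ρ U σ V) := by
  refine regular_of_abs_apply_le_mul_fro (c := (√(μ / m) + ρ) * (√(μ / n) + ρ) * √k)
    (by positivity) hX herr (fun i j => (abs_roundedFactorization_apply_le hρ0 hσ hUμ hVμ i j).trans
      ((mul_le_mul_of_nonneg_left (sum_le_sqrt_mul_fro_mul_diagonal_mul_transpose hU hV σ)
        (by positivity)).trans_eq (by ring))) ?_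
  have := sqrt_div_add_mul_sqrt_div_add_le hμ (by exact_mod_cast hm) (by exact_mod_cast hn)
    hρ0.le hρ
  calc 2 * ((√(μ / m) + ρ) * (√(μ / n) + ρ) * √k) ≤ 2 * (2 * (μ / √(m * n)) * √k) := by gcongr
    _ = 4 * μ * √k / √(m * n) := by ring

theorem epsilon_net_for_incoherent_matrices {m n k : ℕ} (ε μc : ℝ)
    (hε0 : 0 < ε) (hε1 : ε < 1 / 2) (hμ : 1 ≤ μc)
    (hm : 3 ≤ m) (hn : 3 ≤ n) (hk : 1 ≤ k) :
    ∃ S : Finset (Matrix (Fin m) (Fin n) ℝ),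
      (S.card : ℝ) ≤ ((m : ℝ) * n * k / ε) ^ (3 * (m + n) * k) ∧
      ∀ X : Matrix (Fin m) (Fin n) ℝ, Incoherent μc k X → specNorm X = 1 →
        ∃ Y ∈ S, fro (Y - X) < ε ∧ Regular (4 * μc * Real.sqrt k) Y := by
  have hk' : (1 : ℝ) ≤ k := by exact_mod_cast hk
  have hs : 3 ≤ √(m * n) := Real.le_sqrt_of_sq_le (by norm_cast; nlinarith)
  -- the entrywise rounding error `7 k ρ` then gives a Frobenius error of `ε / 3`
  set ρ := ε / (21 * k * √(m * n)) with hρ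
  have hρ0 : 0 < ρ := by positivity
  refine ⟨factorNet m n k ρ, card_factorNet_le_pow hε0 hε1 hm hn hk, fun X hX hXspec => ?_⟩
  obtain ⟨U, σ, V, rfl, hU, hV, hσ0, hUμ, hVμ⟩ := hX.exists_diagonal_factorization
  have hσ1 : ∀ l, |σ l| ≤ 1 := fun l => abs_le.2 ⟨by linarith [hσ0 l],
    hXspec ▸ le_specNorm_mul_diagonal_mul_transpose hU hV (hσ0 l)⟩
  have hU1 := abs_apply_le_one_of_transpose_mul_self_eq_one hU
  have hV1 := abs_apply_le_one_of_transpose_mul_self_eq_one hV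
  have hρs : 4 * ρ * √(m * n) ≤ 1 := by rw [hρ]; field_simp; nlinarith
  have herr : fro (roundedFactorization ρ U σ V - U * diagonal σ * Vᵀ) ≤ ε / 3 := by
    refine (fro_le_of_abs_apply_le (by positivity) (abs_roundedFactorization_sub_apply_le hρ0
      (by nlinarith) hU1 hσ1 hV1)).trans_eq ?_
    rw [hρ]; field_simp; ring
  exact ⟨_, roundedFactorization_mem_factorNet hρ0 hU1 hσ1 hV1, by linarith,
    regular_roundedFactorization hμ (by omega) (by omega) hρ0 hρs hU hV hσ0 hUμ hVμ
      (hXspec ▸ specNorm_le_fro _) (by linarith)⟩
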